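/- With the data of the nonlocal fractional evolution setup, assume in addition that ‖S(t) − S(τ)‖ ≤ ℓ|t − τ| for all t, τ ∈ [0,a], that f satisfies ‖f(s,z₀,…,z_r) − f(s̄,z̄₀,…,z̄_r)‖ ≤ C(|s − s̄| + Σ_{i=0}^r ‖z_i − z̄_i‖), and that u : J → Ω is a continuous solution of the mild-solution integral equation for which there exists k > 0 with ‖u(b_i(s)) − u(b_i(s̄))‖ ≤ k‖u(s) − u(s̄)‖ for all i = 1,…,r and s, s̄ ∈ J. Set N := max_{s∈J} ‖f(s,u(s),u(b₁(s)),…,u(b_r(s)))‖ and δ̃ := ℓ‖Bu₀‖ + ℓ‖B‖·C̃·M·N·a·Σ_{k=1}^p |C_k| + MN + MCa, where C̃ = a^{1−γ}/Γ(2−γ). Then for all t and h > 0 with t, t+h ∈ J: ‖u(t+h) − u(t)‖ ≤ δ̃·h + MC(1 + rk) ∫_{t₀}^t ‖u(s+h) − u(s)‖ ds. -/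

import Mathlib

open Set intervalIntegral

/-- The Riemann–Liouville fractional integral
`(I_{t₀⁺}^δ g)(t) = (1/Γ(δ)) ∫_{t₀}^t (t-s)^(δ-1) g(s) ds` (Bochner integral). -/
noncomputable def fracInt {Ω : Type*} [NormedAddCommGroup Ω] [NormedSpace ℝ Ω]
    (δ t₀ : ℝ) (g : ℝ → Ω) (t : ℝ) : Ω :=
  (1 / Real.Gamma δ) • ∫ s in t₀..t, ((t - s) ^ (δ - 1)) • g s

/-- The tuple `(ω(s), ω(b₁(s)), …, ω(b_r(s)))` fed into the nonlinearity `f`. -/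
noncomputable def fArgs {Ω : Type*} {r : ℕ} (b : Fin r → ℝ → ℝ) (ω : ℝ → Ω) (s : ℝ) :
    Fin (r + 1) → Ω :=
  Fin.cons (ω s) fun i => ω (b i s)

/-- `h_ω(τ) = ∫_{t₀}^τ K(τ - s) f(s, ω(s), ω(b₁(s)), …, ω(b_r(s))) ds`. -/
noncomputable def convMap {Ω : Type*} [NormedAddCommGroup Ω] [NormedSpace ℝ Ω] {r : ℕ}
    (K : ℝ → Ω →L[ℝ] Ω) (t₀ : ℝ) (f : ℝ → (Fin (r + 1) → Ω) → Ω)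
    (b : Fin r → ℝ → ℝ) (ω : ℝ → Ω) (τ : ℝ) : Ω :=
  ∫ s in t₀..τ, (K (τ - s)) (f s (fArgs b ω s))

/-- The solution operator
`(Fω)(t) = S(t-t₀) B u₀ + ∫_{t₀}^t K(t-s) f(s, ω(s), ω(b₁(s)), …, ω(b_r(s))) ds
  - S(t-t₀) B ∑_{k=1}^p C_k (I_{t₀⁺}^{1-γ} h_ω)(t_k)`. -/
noncomputable def Fop {Ω : Type*} [NormedAddCommGroup Ω] [NormedSpace ℝ Ω] {r p : ℕ}
    (S K : ℝ → Ω →L[ℝ] Ω) (t₀ γ : ℝ) (B : Ω →L[ℝ] Ω) (u₀ : Ω)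
    (tk : Fin p → ℝ) (Ck : Fin p → ℝ) (f : ℝ → (Fin (r + 1) → Ω) → Ω)
    (b : Fin r → ℝ → ℝ) (ω : ℝ → Ω) (t : ℝ) : Ω :=
  S (t - t₀) (B u₀) + convMap K t₀ f b ω t
    - S (t - t₀) (B (∑ k, Ck k • fracInt (1 - γ) t₀ (convMap K t₀ f b ω) (tk k)))

/-! Subtracting the mild-solution equation at `t` and `t + h` leaves three increments. The two
terms carrying `S (· - t₀)` change by at most `ℓ h ‖B u₀‖` and `ℓ h ‖B‖ ‖w‖`, where `w` is the
nonlocal sum; each fractional integral in `w` is at most `C̃ M N a`, because the convolution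
`h_u` is bounded by `M N a` on `J`. In the convolution term, the substitution `s ↦ s + h` splits
`∫_{t₀}^{t+h} K(t+h-s) g(s) ds` into a piece over `[t₀, t₀ + h]`, of norm at most `M N h`, and
`∫_{t₀}^t K(t-s) (g(s+h) - g(s)) ds`, which the Lipschitz bounds on `f` and on `u ∘ bᵢ` control
by `M C (h a + (1 + r k) ∫_{t₀}^t ‖u(s+h) - u(s)‖ ds)`. -/

open MeasureTheory Filter Topology

theorem continuousOn_clm_apply_of_norm_le {X 𝕜 E F : Type*} [TopologicalSpace X]
    [NontriviallyNormedField 𝕜] [NormedAddCommGroup E] [NormedSpace 𝕜 E]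
    [NormedAddCommGroup F] [NormedSpace 𝕜 F] {T : X → E →L[𝕜] F} {e : X → E} {s : Set X}
    {M : ℝ} (hT : ∀ x, ContinuousOn (fun y => T y x) s) (hM : ∀ y ∈ s, ‖T y‖ ≤ M)
    (he : ContinuousOn e s) : ContinuousOn (fun y => T y (e y)) s := by
  intro y₀ hy₀
  have hsmall : Tendsto (fun y => T y (e y - e y₀)) (𝓝[s] y₀) (𝓝 0) := by
    have hbound : Tendsto (fun y => M * ‖e y - e y₀‖) (𝓝[s] y₀) (𝓝 0) := by
      simpa using ((he y₀ hy₀).sub_const (e y₀)).norm.const_mul M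
    refine squeeze_zero_norm' ?_ hbound
    filter_upwards [self_mem_nhdsWithin] with y hy
    exact (T y).le_of_opNorm_le (hM y hy) _
  simpa [ContinuousWithinAt] using Tendsto.add (hT (e y₀) y₀ hy₀) hsmall

theorem norm_le_iSup_norm_of_continuousOn {X E : Type*} [TopologicalSpace X]
    [SeminormedAddCommGroup E] {g : X → E} {s : Set X} (hs : IsCompact s)
    (hg : ContinuousOn g s) {x : X} (hx : x ∈ s) : ‖g x‖ ≤ ⨆ y : s, ‖g y‖ :=
  le_ciSup (f := fun y : s => ‖g y‖)
    (by simpa only [image_eq_range] using hs.bddAbove_image hg.norm) ⟨x, hx⟩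

section Integrals

variable {E F : Type*} [NormedAddCommGroup E] [NormedSpace ℝ E]
  [NormedAddCommGroup F] [NormedSpace ℝ F]

theorem norm_integral_clm_apply_le {T : ℝ → E →L[ℝ] F} {g : ℝ → E} {α β M N : ℝ}
    (hαβ : α ≤ β) (hT : ∀ s ∈ Ioc α β, ‖T s‖ ≤ M) (hg : ∀ s ∈ Ioc α β, ‖g s‖ ≤ N) :
    ‖∫ s in α..β, T s (g s)‖ ≤ M * N * (β - α) := by
  have hbound : ∀ s ∈ uIoc α β, ‖T s (g s)‖ ≤ M * N := by
    intro s hs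
    rw [uIoc_of_le hαβ] at hs
    exact ((T s).le_of_opNorm_le (hT s hs) _).trans
      (mul_le_mul_of_nonneg_left (hg s hs) ((norm_nonneg _).trans (hT s hs)))
  simpa only [abs_of_nonneg (sub_nonneg.2 hαβ)] using norm_integral_le_of_norm_le_const hbound

theorem norm_fracInt_le {g : ℝ → E} {δ t₀ T L : ℝ} (hδ : 0 < δ) (hT : t₀ ≤ T)
    (hg : ∀ s ∈ Ioc t₀ T, ‖g s‖ ≤ L) :
    ‖fracInt δ t₀ g T‖ ≤ (T - t₀) ^ δ / Real.Gamma (δ + 1) * L := by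
  have hkernel : ∫ s in t₀..T, (T - s) ^ (δ - 1) = (T - t₀) ^ δ / δ := by
    rw [integral_comp_sub_left (fun x => x ^ (δ - 1)) T, sub_self,
      integral_rpow (Or.inl (by linarith)), sub_add_cancel, Real.zero_rpow hδ.ne', sub_zero]
  have hkernel_int : IntervalIntegrable (fun s => (T - s) ^ (δ - 1)) volume t₀ T := by
    have h := (intervalIntegrable_rpow' (a := 0) (b := T - t₀)
      (by linarith : -1 < δ - 1)).comp_sub_left T
    rw [sub_zero, sub_sub_cancel] at h
    exact h.symm
  have hintegral : ‖∫ s in t₀..T, (T - s) ^ (δ - 1) • g s‖ ≤ (T - t₀) ^ δ / δ * L := by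
    calc ‖∫ s in t₀..T, (T - s) ^ (δ - 1) • g s‖
        ≤ ∫ s in t₀..T, (T - s) ^ (δ - 1) * L := by
          refine norm_integral_le_of_norm_le hT (ae_of_all _ fun s hs => ?_)
            (hkernel_int.mul_const L)
          have hpos : 0 ≤ (T - s) ^ (δ - 1) := Real.rpow_nonneg (by linarith [hs.2]) _
          rw [norm_smul, Real.norm_of_nonneg hpos]
          exact mul_le_mul_of_nonneg_left (hg s hs) hpos
      _ = (T - t₀) ^ δ / δ * L := by rw [intervalIntegral.integral_mul_const, hkernel]
  have hΓ : 0 < Real.Gamma δ := Real.Gamma_pos_of_pos hδ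
  rw [fracInt, norm_smul, Real.norm_of_nonneg (by positivity), Real.Gamma_add_one hδ.ne']
  calc 1 / Real.Gamma δ * ‖∫ s in t₀..T, (T - s) ^ (δ - 1) • g s‖
      ≤ 1 / Real.Gamma δ * ((T - t₀) ^ δ / δ * L) :=
        mul_le_mul_of_nonneg_left hintegral (by positivity)
    _ = (T - t₀) ^ δ / (δ * Real.Gamma δ) * L := by field_simp

end Integrals

section Convolution

variable {E F : Type*} [NormedAddCommGroup E] [NormedSpace ℝ E]
  [NormedAddCommGroup F] [NormedSpace ℝ F] {K : ℝ → E →L[ℝ] F} {g : ℝ → E}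

theorem continuousOn_convolution_integrand {a M c : ℝ} {I : Set ℝ}
    (hK : ∀ x, ContinuousOn (fun τ => K τ x) (Icc 0 a)) (hKM : ∀ τ ∈ Icc 0 a, ‖K τ‖ ≤ M)
    (hg : ContinuousOn g I) (hI : MapsTo (c - ·) I (Icc 0 a)) :
    ContinuousOn (fun s => K (c - s) (g s)) I :=
  continuousOn_clm_apply_of_norm_le
    (fun x => (hK x).comp (continuousOn_const.sub continuousOn_id) hI)
    (fun _ hs => hKM _ (hI hs)) hg

theorem integral_convolution_add_sub {t₀ t h : ℝ}
    (h₁ : IntervalIntegrable (fun s => K (t + h - s) (g s)) volume t₀ (t₀ + h))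
    (h₂ : IntervalIntegrable (fun s => K (t + h - s) (g s)) volume (t₀ + h) (t + h))
    (h₃ : IntervalIntegrable (fun s => K (t - s) (g s)) volume t₀ t) :
    (∫ s in t₀..t + h, K (t + h - s) (g s)) - ∫ s in t₀..t, K (t - s) (g s) =
      (∫ s in t₀..t₀ + h, K (t + h - s) (g s)) + ∫ s in t₀..t, K (t - s) (g (s + h) - g s) := by
  have hshift : ∀ s, K (t + h - (s + h)) (g (s + h)) = K (t - s) (g (s + h)) := fun s => by
    rw [add_sub_add_right_eq_sub]
  have h₂' : IntervalIntegrable (fun s => K (t - s) (g (s + h))) volume t₀ t := by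
    simpa only [hshift, add_sub_cancel_right] using h₂.comp_add_right h
  have hchange : ∫ s in t₀..t, K (t - s) (g (s + h)) =
      ∫ s in t₀ + h..t + h, K (t + h - s) (g s) := by
    simp only [← hshift]
    exact integral_comp_add_right (fun s => K (t + h - s) (g s)) h
  simp only [map_sub]
  rw [integral_sub h₂' h₃, hchange, ← integral_add_adjacent_intervals h₁ h₂]
  abel

theorem norm_integral_convolution_add_sub_le {t₀ t h a M N : ℝ} {φ : ℝ → ℝ}
    (ht : t₀ ≤ t) (hh : 0 < h) (hta : t + h ≤ t₀ + a)
    (hK : ∀ x, ContinuousOn (fun τ => K τ x) (Icc 0 a)) (hKM : ∀ τ ∈ Icc 0 a, ‖K τ‖ ≤ M)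
    (hg : ContinuousOn g (Icc t₀ (t + h))) (hgN : ∀ s ∈ Icc t₀ (t₀ + h), ‖g s‖ ≤ N)
    (hφ : ∀ s ∈ Icc t₀ t, ‖g (s + h) - g s‖ ≤ φ s) (hφi : IntervalIntegrable φ volume t₀ t) :
    ‖(∫ s in t₀..t + h, K (t + h - s) (g s)) - ∫ s in t₀..t, K (t - s) (g s)‖ ≤
      M * N * h + M * ∫ s in t₀..t, φ s := by
  have hM : 0 ≤ M := (norm_nonneg _).trans (hKM h ⟨hh.le, by linarith⟩)
  have hcont : ContinuousOn (fun s => K (t + h - s) (g s)) (Icc t₀ (t + h)) :=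
    continuousOn_convolution_integrand hK hKM hg
      fun s hs => ⟨by linarith [hs.2], by linarith [hs.1]⟩
  have hcont' : ContinuousOn (fun s => K (t - s) (g s)) (Icc t₀ t) :=
    continuousOn_convolution_integrand hK hKM (hg.mono (Icc_subset_Icc_right (by linarith)))
      fun s hs => ⟨by linarith [hs.2], by linarith [hs.1]⟩
  rw [integral_convolution_add_sub
    ((hcont.mono (Icc_subset_Icc_right (by linarith))).intervalIntegrable_of_Icc (by linarith))
    ((hcont.mono (Icc_subset_Icc_left (by linarith))).intervalIntegrable_of_Icc (by linarith))
    (hcont'.intervalIntegrable_of_Icc ht)]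
  refine (norm_add_le _ _).trans (add_le_add ?_ ?_)
  · simpa only [add_sub_cancel_left] using norm_integral_clm_apply_le (by linarith)
      (fun s hs => hKM _ ⟨by linarith [hs.2], by linarith [hs.1]⟩)
      (fun s hs => hgN s (Ioc_subset_Icc_self hs))
  · rw [← intervalIntegral.integral_const_mul]
    refine norm_integral_le_of_norm_le ht (ae_of_all _ fun s hs => ?_) (hφi.const_mul M)
    exact ((K (t - s)).le_of_opNorm_le (hKM _ ⟨by linarith [hs.2], by linarith [hs.1]⟩) _).trans
      (mul_le_mul_of_nonneg_left (hφ s (Ioc_subset_Icc_self hs)) hM)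

end Convolution

theorem continuousOn_fArgs {X : Type*} [TopologicalSpace X] {r : ℕ} {b : Fin r → ℝ → ℝ}
    {ω : ℝ → X} {I : Set ℝ} (hω : ContinuousOn ω I) (hb : ∀ i, ContinuousOn (b i) I)
    (hbI : ∀ i, MapsTo (b i) I I) : ContinuousOn (fArgs b ω) I := by
  refine continuousOn_pi.2 fun i => ?_
  induction i using Fin.cases with
  | zero => simpa [fArgs] using hω
  | succ j => simpa [fArgs, Function.comp_def] using hω.comp (hb j) (hbI j)

theorem sum_norm_fArgs_sub_le {Ω : Type*} [SeminormedAddCommGroup Ω] {r : ℕ}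
    {b : Fin r → ℝ → ℝ} {ω : ℝ → Ω} {s s' k : ℝ}
    (hb : ∀ i, ‖ω (b i s) - ω (b i s')‖ ≤ k * ‖ω s - ω s'‖) :
    ∑ i, ‖fArgs b ω s i - fArgs b ω s' i‖ ≤ (1 + r * k) * ‖ω s - ω s'‖ := by
  rw [Fin.sum_univ_succ]
  simp only [fArgs, Fin.cons_zero, Fin.cons_succ]
  have hsum : ∑ i : Fin r, ‖ω (b i s) - ω (b i s')‖ ≤ r * (k * ‖ω s - ω s'‖) := by
    simpa using Finset.sum_le_sum fun i (_ : i ∈ Finset.univ) => hb i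
  linarith

theorem norm_f_fArgs_sub_le {Ω : Type*} [SeminormedAddCommGroup Ω] {r : ℕ}
    {f : ℝ → (Fin (r + 1) → Ω) → Ω} {b : Fin r → ℝ → ℝ} {u : ℝ → Ω}
    {C kc s s' : ℝ} {I : Set ℝ} (hC : 0 ≤ C) (hs : s ∈ I) (hs' : s' ∈ I)
    (hfLip : ∀ s ∈ I, ∀ s' ∈ I, ∀ z zp : Fin (r + 1) → Ω,
      ‖f s z - f s' zp‖ ≤ C * (|s - s'| + ∑ i, ‖z i - zp i‖))
    (hub : ∀ i : Fin r, ‖u (b i s) - u (b i s')‖ ≤ kc * ‖u s - u s'‖) :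
    ‖f s (fArgs b u s) - f s' (fArgs b u s')‖ ≤
      C * (|s - s'| + (1 + r * kc) * ‖u s - u s'‖) :=
  (hfLip s hs s' hs' _ _).trans <| by gcongr; exact sum_norm_fArgs_sub_le hub

section MildSolution

variable {Ω : Type*} [NormedAddCommGroup Ω] [NormedSpace ℝ Ω] {r p : ℕ}

theorem norm_Fop_add_sub_le (S K : ℝ → Ω →L[ℝ] Ω) (t₀ γ : ℝ) (B : Ω →L[ℝ] Ω) (u₀ : Ω)
    (tk Ck : Fin p → ℝ) (f : ℝ → (Fin (r + 1) → Ω) → Ω) (b : Fin r → ℝ → ℝ) (ω : ℝ → Ω)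
    {t h L : ℝ} (hS : ‖S (t + h - t₀) - S (t - t₀)‖ ≤ L) :
    ‖Fop S K t₀ γ B u₀ tk Ck f b ω (t + h) - Fop S K t₀ γ B u₀ tk Ck f b ω t‖ ≤
      L * (‖B u₀‖ + ‖B‖ * ‖∑ k, Ck k • fracInt (1 - γ) t₀ (convMap K t₀ f b ω) (tk k)‖) +
        ‖convMap K t₀ f b ω (t + h) - convMap K t₀ f b ω t‖ := by
  set w := ∑ k, Ck k • fracInt (1 - γ) t₀ (convMap K t₀ f b ω) (tk k)
  have hdecomp : Fop S K t₀ γ B u₀ tk Ck f b ω (t + h) - Fop S K t₀ γ B u₀ tk Ck f b ω t =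
      (S (t + h - t₀) - S (t - t₀)) (B u₀ - B w) +
        (convMap K t₀ f b ω (t + h) - convMap K t₀ f b ω t) := by
    simp only [Fop, sub_apply, map_sub, w]
    abel
  have hL : 0 ≤ L := (norm_nonneg _).trans hS
  rw [hdecomp]
  refine (norm_add_le _ _).trans (add_le_add_left ?_ _)
  refine ((S (t + h - t₀) - S (t - t₀)).le_of_opNorm_le hS _).trans
    (mul_le_mul_of_nonneg_left ?_ hL)
  exact (norm_sub_le _ _).trans (add_le_add_right (B.le_opNorm w) _)

theorem norm_sum_smul_fracInt_le {g : ℝ → Ω} {tk Ck : Fin p → ℝ} {δ t₀ a L : ℝ} (hδ : 0 < δ)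
    (htk : ∀ k, tk k ∈ Icc t₀ (t₀ + a)) (hg : ∀ s ∈ Icc t₀ (t₀ + a), ‖g s‖ ≤ L) :
    ‖∑ k, Ck k • fracInt δ t₀ g (tk k)‖ ≤
      (∑ k, |Ck k|) * (a ^ δ / Real.Gamma (δ + 1) * L) := by
  rw [Finset.sum_mul]
  refine (norm_sum_le _ _).trans (Finset.sum_le_sum fun k _ => ?_)
  obtain ⟨hk₁, hk₂⟩ := htk k
  have hL : 0 ≤ L := (norm_nonneg _).trans (hg _ (htk k))
  have hfrac := norm_fracInt_le hδ hk₁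
    fun s hs => hg s ⟨hs.1.le, hs.2.trans hk₂⟩
  rw [norm_smul, Real.norm_eq_abs]
  refine mul_le_mul_of_nonneg_left (hfrac.trans ?_) (abs_nonneg _)
  gcongr
  linarith

theorem norm_convMap_le {K : ℝ → Ω →L[ℝ] Ω} {f : ℝ → (Fin (r + 1) → Ω) → Ω}
    {b : Fin r → ℝ → ℝ} {u : ℝ → Ω} {t₀ a M N s : ℝ} (hs : s ∈ Icc t₀ (t₀ + a))
    (hKM : ∀ τ ∈ Icc 0 a, ‖K τ‖ ≤ M) (hgN : ∀ s ∈ Icc t₀ (t₀ + a), ‖f s (fArgs b u s)‖ ≤ N) :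
    ‖convMap K t₀ f b u s‖ ≤ M * N * a := by
  obtain ⟨hs₁, hs₂⟩ := hs
  have hM : 0 ≤ M := (norm_nonneg _).trans (hKM 0 ⟨le_rfl, by linarith⟩)
  have hN : 0 ≤ N := (norm_nonneg _).trans (hgN s ⟨hs₁, hs₂⟩)
  calc ‖convMap K t₀ f b u s‖ ≤ M * N * (s - t₀) :=
        norm_integral_clm_apply_le hs₁
          (fun σ hσ => hKM _ ⟨by linarith [hσ.2], by linarith [hσ.1]⟩)
          (fun σ hσ => hgN σ ⟨hσ.1.le, hσ.2.trans hs₂⟩)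
    _ ≤ M * N * a := by gcongr; linarith

theorem norm_convMap_add_sub_le {K : ℝ → Ω →L[ℝ] Ω} {f : ℝ → (Fin (r + 1) → Ω) → Ω}
    {b : Fin r → ℝ → ℝ} {u : ℝ → Ω} {t₀ a M C kc N t h : ℝ}
    (ht : t ∈ Icc t₀ (t₀ + a)) (hh : 0 < h) (hth : t + h ∈ Icc t₀ (t₀ + a))
    (hK : ∀ x, ContinuousOn (fun τ => K τ x) (Icc 0 a)) (hKM : ∀ τ ∈ Icc 0 a, ‖K τ‖ ≤ M)
    (hfLip : ∀ s ∈ Icc t₀ (t₀ + a), ∀ s' ∈ Icc t₀ (t₀ + a), ∀ z zp : Fin (r + 1) → Ω,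
      ‖f s z - f s' zp‖ ≤ C * (|s - s'| + ∑ i, ‖z i - zp i‖))
    (hub : ∀ i : Fin r, ∀ s ∈ Icc t₀ (t₀ + a), ∀ s' ∈ Icc t₀ (t₀ + a),
      ‖u (b i s) - u (b i s')‖ ≤ kc * ‖u s - u s'‖)
    (hu : ContinuousOn u (Icc t₀ (t₀ + a)))
    (hg : ContinuousOn (fun s => f s (fArgs b u s)) (Icc t₀ (t₀ + a)))
    (hgN : ∀ s ∈ Icc t₀ (t₀ + a), ‖f s (fArgs b u s)‖ ≤ N) :
    ‖convMap K t₀ f b u (t + h) - convMap K t₀ f b u t‖ ≤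
      M * N * h + M * C * h * a + M * C * (1 + r * kc) * ∫ s in t₀..t, ‖u (s + h) - u s‖ := by
  have hC : 0 ≤ C := by
    have h0 := hfLip _ hth _ ht 0 0
    simp only [add_sub_cancel_left, abs_of_pos hh, sub_self, norm_zero, Finset.sum_const_zero,
      add_zero] at h0
    exact nonneg_of_mul_nonneg_left ((norm_nonneg _).trans h0) hh
  obtain ⟨ht₁, ht₂⟩ := ht
  obtain ⟨-, hth₂⟩ := hth
  have hM : 0 ≤ M := (norm_nonneg _).trans (hKM h ⟨hh.le, by linarith⟩)
  have hshift : MapsTo (· + h) (Icc t₀ t) (Icc t₀ (t₀ + a)) :=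
    fun s hs => ⟨by linarith [hs.1], by linarith [hs.2]⟩
  have hdiff : IntervalIntegrable (fun s => ‖u (s + h) - u s‖) volume t₀ t :=
    ((hu.comp (continuous_add_const h).continuousOn hshift).sub
      (hu.mono (Icc_subset_Icc_right (by linarith)))).norm.intervalIntegrable_of_Icc ht₁
  have hφ : ∀ s ∈ Icc t₀ t, ‖f (s + h) (fArgs b u (s + h)) - f s (fArgs b u s)‖ ≤
      C * (h + (1 + r * kc) * ‖u (s + h) - u s‖) := fun s hs => by
    have hsJ : s ∈ Icc t₀ (t₀ + a) := ⟨hs.1, by linarith [hs.2]⟩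
    simpa only [add_sub_cancel_left, abs_of_pos hh] using
      norm_f_fArgs_sub_le hC (hshift hs) hsJ hfLip fun i => hub i _ (hshift hs) _ hsJ
  have hconv := norm_integral_convolution_add_sub_le ht₁ hh hth₂ hK hKM
    (hg.mono (Icc_subset_Icc_right hth₂)) (fun s hs => hgN s ⟨hs.1, by linarith [hs.2]⟩) hφ
    ((intervalIntegrable_const.add (hdiff.const_mul _)).const_mul C)
  rw [intervalIntegral.integral_const_mul, intervalIntegral.integral_add intervalIntegrable_const
    (hdiff.const_mul _), intervalIntegral.integral_const, intervalIntegral.integral_const_mul,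
    smul_eq_mul] at hconv
  calc _ ≤ _ := hconv
    _ = M * N * h + M * C * h * (t - t₀) +
          M * C * (1 + r * kc) * ∫ s in t₀..t, ‖u (s + h) - u s‖ := by ring
    _ ≤ _ := by gcongr; linarith

end MildSolution

theorem mild_solution_increment_estimate_general {Ω : Type*} [NormedAddCommGroup Ω]
    [NormedSpace ℝ Ω] {r p : ℕ}
    (t₀ a γ M C ℓ kc N δ' : ℝ) (hγ1 : γ < 1)
    (S K : ℝ → Ω →L[ℝ] Ω)
    (hKcont : ∀ x : Ω, ContinuousOn (fun t => K t x) (Icc 0 a))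
    (hKbd : ∀ t ∈ Icc (0 : ℝ) a, ‖K t‖ ≤ M)
    (hSlip : ∀ t ∈ Icc (0 : ℝ) a, ∀ τ ∈ Icc (0 : ℝ) a, ‖S t - S τ‖ ≤ ℓ * |t - τ|)
    (tk : Fin p → ℝ)
    (htkJ : ∀ k, tk k ∈ Icc t₀ (t₀ + a))
    (Ck : Fin p → ℝ)
    (B : Ω →L[ℝ] Ω) (u₀ : Ω)
    (b : Fin r → ℝ → ℝ)
    (hbcont : ∀ i, ContinuousOn (b i) (Icc t₀ (t₀ + a)))
    (hbmaps : ∀ i, MapsTo (b i) (Icc t₀ (t₀ + a)) (Icc t₀ (t₀ + a)))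
    (f : ℝ → (Fin (r + 1) → Ω) → Ω)
    (hfcont : Continuous fun q : ℝ × (Fin (r + 1) → Ω) => f q.1 q.2)
    (hfLip : ∀ s ∈ Icc t₀ (t₀ + a), ∀ s' ∈ Icc t₀ (t₀ + a),
      ∀ z zp : Fin (r + 1) → Ω,
      ‖f s z - f s' zp‖ ≤ C * (|s - s'| + ∑ i, ‖z i - zp i‖))
    (u : ℝ → Ω) (hucont : ContinuousOn u (Icc t₀ (t₀ + a)))
    (humild : ∀ t ∈ Icc t₀ (t₀ + a), u t = Fop S K t₀ γ B u₀ tk Ck f b u t)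
    (hub : ∀ (i : Fin r), ∀ s ∈ Icc t₀ (t₀ + a), ∀ s' ∈ Icc t₀ (t₀ + a),
      ‖u (b i s) - u (b i s')‖ ≤ kc * ‖u s - u s'‖)
    (hN : N = ⨆ s : Icc t₀ (t₀ + a), ‖f s (fArgs b u s)‖)
    (hδ' : δ' = ℓ * ‖B u₀‖ +
      ℓ * ‖B‖ * (a ^ (1 - γ) / Real.Gamma (2 - γ)) * M * N * a * (∑ k, |Ck k|) +
      M * N + M * C * a) :
    ∀ t ∈ Icc t₀ (t₀ + a), ∀ h : ℝ, 0 < h → t + h ∈ Icc t₀ (t₀ + a) →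
      ‖u (t + h) - u t‖ ≤ δ' * h +
        M * C * (1 + (r : ℝ) * kc) * ∫ s in t₀..t, ‖u (s + h) - u s‖ := by
  intro t ht h hh hth
  have hg : ContinuousOn (fun s => f s (fArgs b u s)) (Icc t₀ (t₀ + a)) :=
    hfcont.comp_continuousOn (continuousOn_id.prodMk (continuousOn_fArgs hucont hbcont hbmaps))
  have hgN : ∀ s ∈ Icc t₀ (t₀ + a), ‖f s (fArgs b u s)‖ ≤ N := fun s hs =>
    hN ▸ norm_le_iSup_norm_of_continuousOn isCompact_Icc hg hs
  have hw := norm_sum_smul_fracInt_le (Ck := Ck) (by linarith : 0 < 1 - γ) htkJ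
    fun s hs => norm_convMap_le hs hKbd hgN
  rw [show 1 - γ + 1 = 2 - γ by ring] at hw
  have hΔS : ‖S (t + h - t₀) - S (t - t₀)‖ ≤ ℓ * h := by
    simpa only [sub_sub_sub_cancel_right, add_sub_cancel_left, abs_of_pos hh] using
      hSlip (t + h - t₀) ⟨by linarith [hth.1], by linarith [hth.2]⟩
        (t - t₀) ⟨by linarith [ht.1], by linarith [ht.2]⟩
  have hΔconv := norm_convMap_add_sub_le ht hh hth hKcont hKbd hfLip hub hucont hg hgN
  rw [humild _ hth, humild _ ht]
  refine (norm_Fop_add_sub_le S K t₀ γ B u₀ tk Ck f b u hΔS).trans ?_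
  have hℓh : 0 ≤ ℓ * h := (norm_nonneg _).trans hΔS
  have hBw := mul_le_mul_of_nonneg_left hw (mul_nonneg hℓh (norm_nonneg B))
  rw [hδ']
  linarith

/-- Increment estimate for the mild solution: under the stated Lipschitz assumptions on
`S`, `f` and `u ∘ bᵢ`, with `N = max_{s ∈ J} ‖f(s, u(s), u(b₁(s)), …, u(b_r(s)))‖` and
`δ̃ = ℓ‖B u₀‖ + ℓ‖B‖ C̃ M N a ∑_k |C_k| + M N + M C a` (`C̃ = a^(1-γ)/Γ(2-γ)`), every
continuous mild solution `u` satisfies, for all `t` and `h > 0` with `t, t + h ∈ J`,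
`‖u(t+h) - u(t)‖ ≤ δ̃ h + M C (1 + r k) ∫_{t₀}^t ‖u(s+h) - u(s)‖ ds`. -/
theorem mild_solution_increment_estimate {Ω : Type*} [NormedAddCommGroup Ω]
    [NormedSpace ℝ Ω] [CompleteSpace Ω] {r p : ℕ}
    (t₀ a γ M C ℓ kc N δ' : ℝ) (ht₀ : 0 ≤ t₀) (ha : 0 < a) (hγ0 : 0 ≤ γ) (hγ1 : γ < 1)
    (S K : ℝ → Ω →L[ℝ] Ω)
    (hScont : ∀ x : Ω, ContinuousOn (fun t => S t x) (Icc 0 a))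
    (hKcont : ∀ x : Ω, ContinuousOn (fun t => K t x) (Icc 0 a))
    (hSbd : ∀ t ∈ Icc (0 : ℝ) a, ‖S t‖ ≤ M)
    (hKbd : ∀ t ∈ Icc (0 : ℝ) a, ‖K t‖ ≤ M)
    (hSlip : ∀ t ∈ Icc (0 : ℝ) a, ∀ τ ∈ Icc (0 : ℝ) a, ‖S t - S τ‖ ≤ ℓ * |t - τ|)
    (tk : Fin p → ℝ) (htk : StrictMono tk)
    (htkJ : ∀ k, tk k ∈ Icc t₀ (t₀ + a))
    (Ck : Fin p → ℝ) (hCk : ∀ k, Ck k ≠ 0)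
    (B : Ω →L[ℝ] Ω) (u₀ : Ω)
    (b : Fin r → ℝ → ℝ)
    (hbcont : ∀ i, ContinuousOn (b i) (Icc t₀ (t₀ + a)))
    (hbmaps : ∀ i, MapsTo (b i) (Icc t₀ (t₀ + a)) (Icc t₀ (t₀ + a)))
    (f : ℝ → (Fin (r + 1) → Ω) → Ω)
    (hfcont : Continuous fun q : ℝ × (Fin (r + 1) → Ω) => f q.1 q.2)
    (hfLip : ∀ s ∈ Icc t₀ (t₀ + a), ∀ s' ∈ Icc t₀ (t₀ + a),
      ∀ z zp : Fin (r + 1) → Ω,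
      ‖f s z - f s' zp‖ ≤ C * (|s - s'| + ∑ i, ‖z i - zp i‖))
    (u : ℝ → Ω) (hucont : ContinuousOn u (Icc t₀ (t₀ + a)))
    (humild : ∀ t ∈ Icc t₀ (t₀ + a), u t = Fop S K t₀ γ B u₀ tk Ck f b u t)
    (hkc : 0 < kc)
    (hub : ∀ (i : Fin r), ∀ s ∈ Icc t₀ (t₀ + a), ∀ s' ∈ Icc t₀ (t₀ + a),
      ‖u (b i s) - u (b i s')‖ ≤ kc * ‖u s - u s'‖)
    (hN : N = ⨆ s : Icc t₀ (t₀ + a), ‖f s (fArgs b u s)‖)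
    (hδ' : δ' = ℓ * ‖B u₀‖ +
      ℓ * ‖B‖ * (a ^ (1 - γ) / Real.Gamma (2 - γ)) * M * N * a * (∑ k, |Ck k|) +
      M * N + M * C * a) :
    ∀ t ∈ Icc t₀ (t₀ + a), ∀ h : ℝ, 0 < h → t + h ∈ Icc t₀ (t₀ + a) →
      ‖u (t + h) - u t‖ ≤ δ' * h +
        M * C * (1 + (r : ℝ) * kc) * ∫ s in t₀..t, ‖u (s + h) - u s‖ :=
  mild_solution_increment_estimate_general t₀ a γ M C ℓ kc N δ' hγ1 S K hKcont hKbd hSlip tk htkJ Ck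
    B u₀ b hbcont hbmaps f hfcont hfLip u hucont humild hub hN hδ'
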